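/- arXiv:0712.3035 — 2 statements merged into one kernel-verified Lean document; each statement's English description precedes it below -/
import Mathlib

section
/- Let μ be a Borel probability measure on [0,∞) such that the function λ ↦ log λ is μ-integrable. Then the function s ↦ s/(1+s²) − ∫ 1/(λ+s) dμ(λ) is Lebesgue integrable on (0,∞), and ∫₀^∞ ( s/(1+s²) − ∫ 1/(λ+s) dμ(λ) ) ds = ∫ log λ dμ(λ). -/
/-! For `λ > 0` the kernel `k(λ, s) = s / (1 + s²) - 1 / (λ + s)` has the primitive
`log (1 + s²) / 2 - log (λ + s)`, which is `-log λ` at `s = 0` and tends to `0` at infinity,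
so `∫₀^∞ k(λ, s) ds = log λ`. The kernel has the sign of `λ s - 1`, so evaluating the same
primitive at `s = 1/λ` gives `∫₀^∞ |k(λ, s)| ds = log (1 + λ²) - log λ ≤ log 2 + |log λ|`.
Hence `k` is integrable for `μ ⊗ ds` as soon as `log` is `μ`-integrable, and Fubini exchanges
the two integrals. -/

open MeasureTheory Set Filter Topology Real

noncomputable def logKernel (lam s : ℝ) : ℝ := s / (1 + s ^ 2) - 1 / (lam + s)

lemma logKernel_eq_div {lam s : ℝ} (h : lam + s ≠ 0) :
    logKernel lam s = (lam * s - 1) / ((1 + s ^ 2) * (lam + s)) := by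
  have : (1 + s ^ 2) ≠ 0 := by positivity
  rw [logKernel]
  field_simp
  ring

lemma abs_logKernel_le {lam s : ℝ} (hl : 0 < lam) (hs : 0 < s) :
    |logKernel lam s| ≤ (lam + lam⁻¹) * (1 + s ^ 2)⁻¹ := by
  have hls : 0 < lam + s := by linarith
  have hden : 0 < (1 + s ^ 2) * (lam + s) := by positivity
  rw [logKernel_eq_div hls.ne', abs_div, abs_of_pos hden, div_le_iff₀ hden]
  calc |lam * s - 1| ≤ lam * s + 1 := abs_le.2 ⟨by nlinarith [mul_pos hl hs], by linarith⟩
    _ ≤ (lam + lam⁻¹) * (lam + s) := by nlinarith [mul_pos hl hl, mul_pos (inv_pos.2 hl) hs, mul_inv_cancel₀ hl.ne']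
    _ = (lam + lam⁻¹) * (1 + s ^ 2)⁻¹ * ((1 + s ^ 2) * (lam + s)) := by
      field_simp

lemma integrableOn_logKernel {lam : ℝ} (hl : 0 < lam) : IntegrableOn (logKernel lam) (Ioi 0) := by
  refine (integrable_inv_one_add_sq.const_mul (lam + lam⁻¹)).integrableOn.mono'
    (by unfold logKernel; fun_prop) ?_
  filter_upwards [ae_restrict_mem measurableSet_Ioi] with s hs
  exact abs_logKernel_le hl hs

lemma hasDerivAt_logKernel_primitive {lam s : ℝ} (h : lam + s ≠ 0) :
    HasDerivAt (fun s => log (1 + s ^ 2) / 2 - log (lam + s)) (logKernel lam s) s := by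
  have hsq : HasDerivAt (fun s : ℝ => 1 + s ^ 2) (2 * s) s := by
    simpa using (hasDerivAt_pow 2 s).const_add 1
  have hlin : HasDerivAt (fun s : ℝ => lam + s) 1 s := (hasDerivAt_id s).const_add lam
  refine (((hsq.log (by positivity)).div_const 2).sub (hlin.log h)).congr_deriv ?_
  rw [logKernel]
  field_simp

lemma tendsto_logKernel_primitive_atTop (lam : ℝ) :
    Tendsto (fun s => log (1 + s ^ 2) / 2 - log (lam + s)) atTop (𝓝 0) := by
  have hinv : Tendsto (fun s : ℝ => s⁻¹) atTop (𝓝 0) := tendsto_inv_atTop_zero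
  have hratio : Tendsto (fun s : ℝ => (1 + s⁻¹ ^ 2) / (1 + lam * s⁻¹) ^ 2) atTop
      (𝓝 ((1 + 0 ^ 2) / (1 + lam * 0) ^ 2)) :=
    ((hinv.pow 2).const_add 1).div (((hinv.const_mul lam).const_add 1).pow 2) (by simp)
  have hlog : Tendsto (fun s => log ((1 + s⁻¹ ^ 2) / (1 + lam * s⁻¹) ^ 2) / 2) atTop (𝓝 0) := by
    simpa using (hratio.log (by simp)).div_const 2
  refine hlog.congr' ?_
  filter_upwards [eventually_gt_atTop 0, eventually_gt_atTop (-lam)] with s hs hgt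
  have hls : lam + s ≠ 0 := by linarith
  have hratio_eq : (1 + s⁻¹ ^ 2) / (1 + lam * s⁻¹) ^ 2 = (1 + s ^ 2) / (lam + s) ^ 2 := by
    rw [show 1 + s⁻¹ ^ 2 = s⁻¹ ^ 2 * (1 + s ^ 2) by field_simp; ring,
      show 1 + lam * s⁻¹ = s⁻¹ * (lam + s) by field_simp; ring, mul_pow,
      mul_div_mul_left _ _ (by positivity)]
  rw [hratio_eq, log_div (by positivity) (by positivity), log_pow]
  ring

lemma integral_logKernel {lam : ℝ} (hl : 0 < lam) : ∫ s in Ioi 0, logKernel lam s = log lam := by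
  rw [integral_Ioi_of_hasDerivAt_of_tendsto
    (hasDerivAt_logKernel_primitive (by linarith)).continuousAt.continuousWithinAt
    (fun s hs => hasDerivAt_logKernel_primitive (by linarith [mem_Ioi.1 hs]))
    (integrableOn_logKernel hl) (tendsto_logKernel_primitive_atTop lam)]
  simp

lemma integral_Ioc_logKernel {lam : ℝ} (hl : 0 < lam) :
    ∫ s in Ioc 0 lam⁻¹, logKernel lam s =
      log (1 + lam⁻¹ ^ 2) / 2 - log (lam + lam⁻¹) + log lam := by
  have hc : 0 ≤ lam⁻¹ := by positivity
  rw [← intervalIntegral.integral_of_le hc, intervalIntegral.integral_eq_sub_of_hasDerivAt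
    (fun s hs => hasDerivAt_logKernel_primitive (by linarith [(uIcc_of_le hc ▸ hs).1]))
    ((intervalIntegrable_iff_integrableOn_Ioc_of_le hc).2
      ((integrableOn_logKernel hl).mono_set Ioc_subset_Ioi_self))]
  simp

lemma abs_logKernel_eq_sub_indicator {lam s : ℝ} (hl : 0 < lam) (hs : 0 < s) :
    |logKernel lam s| = logKernel lam s - 2 * (Ioc 0 lam⁻¹).indicator (logKernel lam) s := by
  have hls : 0 < lam + s := by linarith
  have hden : 0 < (1 + s ^ 2) * (lam + s) := by positivity
  by_cases hsc : s ≤ lam⁻¹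
  · have hneg : logKernel lam s ≤ 0 := by
      rw [logKernel_eq_div hls.ne']
      exact div_nonpos_of_nonpos_of_nonneg (by nlinarith [mul_inv_cancel₀ hl.ne']) hden.le
    rw [indicator_of_mem (show s ∈ Ioc 0 lam⁻¹ from ⟨hs, hsc⟩), abs_of_nonpos hneg]
    ring
  · have hnonneg : 0 ≤ logKernel lam s := by
      rw [logKernel_eq_div hls.ne']
      exact div_nonneg (by nlinarith [mul_inv_cancel₀ hl.ne']) hden.le
    rw [indicator_of_notMem (fun h => hsc h.2), abs_of_nonneg hnonneg]
    ring

lemma integral_abs_logKernel {lam : ℝ} (hl : 0 < lam) :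
    ∫ s in Ioi 0, |logKernel lam s| = log (1 + lam ^ 2) - log lam := by
  have hint := integrableOn_logKernel hl
  have hsub : Ioc 0 lam⁻¹ ⊆ Ioi 0 := Ioc_subset_Ioi_self
  rw [setIntegral_congr_fun measurableSet_Ioi fun s hs => abs_logKernel_eq_sub_indicator hl hs,
    integral_sub hint ((hint.indicator measurableSet_Ioc).const_mul 2), integral_const_mul,
    setIntegral_indicator measurableSet_Ioc, inter_eq_right.2 hsub, integral_logKernel hl,
    integral_Ioc_logKernel hl]
  have hsum : lam + lam⁻¹ = (1 + lam ^ 2) / lam := by field_simp; ring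
  have hsq : 1 + lam⁻¹ ^ 2 = (1 + lam ^ 2) / lam ^ 2 := by field_simp; ring
  rw [hsum, hsq, log_div (by positivity) hl.ne', log_div (by positivity) (by positivity), log_pow]
  push_cast
  ring

lemma log_one_add_sq_sub_log_le {lam : ℝ} (hl : 0 < lam) :
    log (1 + lam ^ 2) - log lam ≤ log 2 + |log lam| := by
  rcases le_total lam 1 with hle | hge
  · have : log (1 + lam ^ 2) ≤ log 2 :=
      log_le_log (by positivity) (by nlinarith)
    linarith [neg_le_abs (log lam)]
  · have : log (1 + lam ^ 2) ≤ log (2 * lam ^ 2) := log_le_log (by positivity) (by nlinarith)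
    rw [log_mul two_ne_zero (by positivity), log_pow, Nat.cast_ofNat] at this
    linarith [le_abs_self (log lam)]

lemma integrable_uncurry_logKernel {μ : Measure ℝ} [IsFiniteMeasure μ] (hpos : ∀ᵐ lam ∂μ, 0 < lam)
    (hlog : Integrable log μ) :
    Integrable (Function.uncurry logKernel) (μ.prod (volume.restrict (Ioi 0))) := by
  have hmeas : AEStronglyMeasurable (Function.uncurry logKernel)
      (μ.prod (volume.restrict (Ioi 0))) := by
    unfold Function.uncurry logKernel
    fun_prop
  refine (integrable_prod_iff hmeas).2 ⟨hpos.mono fun lam hl => integrableOn_logKernel hl, ?_⟩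
  refine ((integrable_const (log 2)).add hlog.abs).mono' hmeas.norm.integral_prod_right' ?_
  filter_upwards [hpos] with lam hl
  simp only [Function.uncurry_apply_pair, norm_eq_abs]
  rw [abs_of_nonneg (integral_nonneg fun _ => abs_nonneg _), integral_abs_logKernel hl]
  exact log_one_add_sq_sub_log_le hl

lemma integral_logKernel_eq_sub_integral {μ : Measure ℝ} [IsProbabilityMeasure μ]
    (hnonneg : ∀ᵐ lam ∂μ, 0 ≤ lam) {s : ℝ} (hs : 0 < s) :
    ∫ lam, logKernel lam s ∂μ = s / (1 + s ^ 2) - ∫ lam, 1 / (lam + s) ∂μ := by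
  have hint : Integrable (fun lam => 1 / (lam + s)) μ := by
    refine (integrable_const s⁻¹).mono' (Measurable.aestronglyMeasurable (by fun_prop)) ?_
    filter_upwards [hnonneg] with lam hl
    rw [norm_eq_abs, abs_of_pos (by positivity), one_div]
    exact inv_anti₀ hs (by linarith)
  simp only [logKernel]
  rw [integral_sub (integrable_const _) hint, integral_const, probReal_univ, one_smul]

/-- The measure-theoretic core of the electrical representation of tree entropy:
if μ is a Borel probability measure on [0,∞) (i.e. giving no mass to (-∞,0)) for which
λ ↦ log λ is μ-integrable (in particular, since log 0 = −∞, μ gives no mass to {0}),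
then s ↦ s/(1+s²) − ∫ 1/(λ+s) dμ(λ) is Lebesgue integrable on (0,∞) and its integral
equals ∫ log λ dμ(λ). -/
theorem tree_entropy_resistance_representation (μ : Measure ℝ) [IsProbabilityMeasure μ]
    (hsupp : μ (Iio 0) = 0) (hzero : μ {0} = 0)
    (hlog : Integrable (fun lam : ℝ => Real.log lam) μ) :
    IntegrableOn (fun s : ℝ => s / (1 + s ^ 2) - ∫ lam, 1 / (lam + s) ∂μ) (Ioi 0) volume ∧
    ∫ s in Ioi (0 : ℝ), (s / (1 + s ^ 2) - ∫ lam, 1 / (lam + s) ∂μ) =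
      ∫ lam, Real.log lam ∂μ := by
  have hpos : ∀ᵐ lam ∂μ, 0 < lam := by
    rw [ae_iff, show {lam : ℝ | ¬0 < lam} = Iio 0 ∪ {0} by ext; simp [le_iff_lt_or_eq]]
    exact measure_union_null hsupp hzero
  have hK := integrable_uncurry_logKernel hpos hlog
  have hfiber : (fun s => ∫ lam, logKernel lam s ∂μ) =ᵐ[volume.restrict (Ioi 0)]
      fun s => s / (1 + s ^ 2) - ∫ lam, 1 / (lam + s) ∂μ := by
    filter_upwards [ae_restrict_mem measurableSet_Ioi] with s hs
    exact integral_logKernel_eq_sub_integral (hpos.mono fun _ => le_of_lt) hs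
  refine ⟨hK.swap.integral_prod_left.congr hfiber, ?_⟩
  calc ∫ s in Ioi 0, (s / (1 + s ^ 2) - ∫ lam, 1 / (lam + s) ∂μ)
      = ∫ s in Ioi 0, ∫ lam, logKernel lam s ∂μ := (integral_congr_ae hfiber).symm
    _ = ∫ lam, (∫ s in Ioi 0, logKernel lam s) ∂μ := (integral_integral_swap hK).symm
    _ = ∫ lam, log lam ∂μ := integral_congr_ae (hpos.mono fun _ => integral_logKernel)
end

section
/- There exists a constant c₁ > 0 with the following property. For every sequence x : ℤ → [0,∞), consider the Markov chain on ℤ in which, from an even vertex 2n, the chain moves to 2n+1 with probability 1/(1+e^{−x_n}) and to 2n−1 with probability e^{−x_n}/(1+e^{−x_n}), and from an odd vertex 2n+1, it moves to 2n with probability 1/(1+e^{−x_{n+1}}) and to 2n+2 with probability e^{−x_{n+1}}/(1+e^{−x_{n+1}}); let p_m(0) denote the probability that this chain started at 0 is at 0 after m steps. Then for every integer k with 1 ≤ k ≤ exp( min(x₀, x₁) ), one has p_{2k}(0) ≥ c₁. -/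
/-- One-step transition probability of the network random walk on ℤ in which each edge
(2n, 2n+1) has conductance 1 and each edge (2n−1, 2n) has conductance e^{−x_n}:
from the even vertex 2n, move to 2n+1 with probability 1/(1+e^{−x_n}) and to 2n−1 with
probability e^{−x_n}/(1+e^{−x_n}); from the odd vertex 2n+1, move to 2n with probability
1/(1+e^{−x_{n+1}}) and to 2n+2 with probability e^{−x_{n+1}}/(1+e^{−x_{n+1}}). -/
noncomputable def stepProb (x : ℤ → ℝ) (a b : ℤ) : ℝ :=
  if Even a then
    -- a = 2n with n = a/2
    if b = a + 1 then 1 / (1 + Real.exp (-(x (a / 2))))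
    else if b = a - 1 then Real.exp (-(x (a / 2))) / (1 + Real.exp (-(x (a / 2))))
    else 0
  else
    -- a = 2n+1 with n = (a-1)/2
    if b = a - 1 then 1 / (1 + Real.exp (-(x ((a - 1) / 2 + 1))))
    else if b = a + 1 then
      Real.exp (-(x ((a - 1) / 2 + 1))) / (1 + Real.exp (-(x ((a - 1) / 2 + 1))))
    else 0

/-- The distribution after m steps of the above chain started at 0: `walkDist x m z` is
the probability of being at z after m steps.  (One step of the chain moves from a vertex
to one of its two neighbors, so the mass at z after m+1 steps comes from z−1 and z+1.) -/
noncomputable def walkDist (x : ℤ → ℝ) : ℕ → ℤ → ℝ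
  | 0, z => if z = 0 then 1 else 0
  | m + 1, z =>
      walkDist x m (z - 1) * stepProb x (z - 1) z + walkDist x m (z + 1) * stepProb x (z + 1) z

lemma stepProb_nonneg (x : ℤ → ℝ) (a b : ℤ) : 0 ≤ stepProb x a b := by
  unfold stepProb
  split_ifs <;> positivity

lemma walkDist_nonneg (x : ℤ → ℝ) (m : ℕ) (z : ℤ) : 0 ≤ walkDist x m z := by
  induction m generalizing z with
  | zero => simp only [walkDist]; split_ifs <;> norm_num
  | succ m ih =>
      simp only [walkDist]
      have := stepProb_nonneg x (z - 1) z
      have := stepProb_nonneg x (z + 1) z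
      have := ih (z - 1)
      have := ih (z + 1)
      positivity

lemma stepProb_01 (x : ℤ → ℝ) : stepProb x 0 1 = 1 / (1 + Real.exp (-(x 0))) := by
  norm_num [stepProb]

lemma stepProb_10 (x : ℤ → ℝ) : stepProb x 1 0 = 1 / (1 + Real.exp (-(x 1))) := by
  norm_num [stepProb, Int.even_iff]

lemma walk_key (x : ℤ → ℝ) (m : ℕ) :
    (stepProb x 0 1 * stepProb x 1 0) ^ m ≤ walkDist x (2 * m) 0 := by
  induction m with
  | zero => simp [walkDist]
  | succ m ih =>
      have h1 : walkDist x (2 * m) 0 * stepProb x 0 1 ≤ walkDist x (2 * m + 1) 1 := by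
        have he : walkDist x (2 * m + 1) 1 =
            walkDist x (2 * m) 0 * stepProb x 0 1 +
            walkDist x (2 * m) 2 * stepProb x 2 1 := by
          simp [walkDist]
        rw [he]
        have := mul_nonneg (walkDist_nonneg x (2 * m) 2) (stepProb_nonneg x 2 1)
        linarith
      have h2 : walkDist x (2 * m + 1) 1 * stepProb x 1 0 ≤ walkDist x (2 * m + 2) 0 := by
        have he : walkDist x (2 * m + 2) 0 =
            walkDist x (2 * m + 1) (-1) * stepProb x (-1) 0 +
            walkDist x (2 * m + 1) 1 * stepProb x 1 0 := by
          simp [walkDist]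
        rw [he]
        have := mul_nonneg (walkDist_nonneg x (2 * m + 1) (-1)) (stepProb_nonneg x (-1) 0)
        linarith
      have hs0 : 0 ≤ stepProb x 0 1 := stepProb_nonneg x 0 1
      have hs1 : 0 ≤ stepProb x 1 0 := stepProb_nonneg x 1 0
      have h2m : 2 * (m + 1) = 2 * m + 2 := by ring
      rw [h2m, pow_succ]
      calc (stepProb x 0 1 * stepProb x 1 0) ^ m * (stepProb x 0 1 * stepProb x 1 0)
          ≤ walkDist x (2 * m) 0 * (stepProb x 0 1 * stepProb x 1 0) :=
            mul_le_mul_of_nonneg_right ih (by positivity)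
        _ = walkDist x (2 * m) 0 * stepProb x 0 1 * stepProb x 1 0 := by ring
        _ ≤ walkDist x (2 * m + 1) 1 * stepProb x 1 0 :=
            mul_le_mul_of_nonneg_right h1 hs1
        _ ≤ walkDist x (2 * m + 2) 0 := h2

/-- There is a constant c₁ > 0 such that for every choice of nonnegative weights
x : ℤ → [0,∞) and every integer k with 1 ≤ k ≤ exp(min(x₀, x₁)), the 2k-step return
probability to 0 of the network random walk satisfies p_{2k}(0) ≥ c₁. -/
theorem return_probability_lower_bound :
    ∃ c₁ : ℝ, 0 < c₁ ∧
      ∀ x : ℤ → ℝ, (∀ n, 0 ≤ x n) →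
        ∀ k : ℕ, 1 ≤ k → (k : ℝ) ≤ Real.exp (min (x 0) (x 1)) →
          c₁ ≤ walkDist x (2 * k) 0 := by
  refine ⟨Real.exp (-2), Real.exp_pos _, fun x hx k hk hke => ?_⟩
  have hk0 : (0 : ℝ) < k := by exact_mod_cast hk
  have h0 : Real.exp (-(x 0)) ≤ 1 / k := by
    rw [Real.exp_neg, div_eq_inv_mul, mul_one]
    exact inv_anti₀ hk0 (hke.trans (Real.exp_le_exp.mpr (min_le_left _ _)))
  have h1 : Real.exp (-(x 1)) ≤ 1 / k := by
    rw [Real.exp_neg, div_eq_inv_mul, mul_one]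
    exact inv_anti₀ hk0 (hke.trans (Real.exp_le_exp.mpr (min_le_right _ _)))
  -- exp(-(1/k)) ≤ 1/(1+e^{-x i})
  have bound : ∀ i : ℤ, Real.exp (-(x i)) ≤ 1 / k →
      Real.exp (-(1 / k)) ≤ 1 / (1 + Real.exp (-(x i))) := by
    intro i hi
    have hpos : (0:ℝ) < 1 + Real.exp (-(x i)) := by positivity
    rw [le_div_iff₀ hpos]
    have h1k : 1 + Real.exp (-(x i)) ≤ Real.exp (1 / k) := by
      have := Real.add_one_le_exp (1 / k)
      linarith
    calc Real.exp (-(1 / k)) * (1 + Real.exp (-(x i)))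
        ≤ Real.exp (-(1 / k)) * Real.exp (1 / k) :=
          mul_le_mul_of_nonneg_left h1k (Real.exp_nonneg _)
      _ = 1 := by rw [← Real.exp_add]; norm_num
  have b0 := bound 0 h0
  have b1 := bound 1 h1
  have hprod : Real.exp (-(2 / k)) ≤ stepProb x 0 1 * stepProb x 1 0 := by
    rw [stepProb_01, stepProb_10]
    have : Real.exp (-(2 / k)) = Real.exp (-(1 / k)) * Real.exp (-(1 / k)) := by
      rw [← Real.exp_add]; ring_nf
    rw [this]
    exact mul_le_mul b0 b1 (Real.exp_nonneg _) (by positivity)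
  calc Real.exp (-2) = Real.exp (-(2 / k)) ^ k := by
        rw [← Real.exp_nat_mul]
        congr 1
        field_simp
    _ ≤ (stepProb x 0 1 * stepProb x 1 0) ^ k :=
        pow_le_pow_left₀ (Real.exp_nonneg _) hprod k
    _ ≤ walkDist x (2 * k) 0 := walk_key x k
end
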